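/- arXiv:2205.15024 — 4 statements merged into one kernel-verified Lean document; each statement's English description precedes it below -/
import Mathlib

section
/- In the integral quandle ring of the dihedral quandle R_{2k} (k ≥ 2), the product of any two elements of the augmentation ideal is annihilated on the 'middle' generator: for all x, y in Δ(R_{2k}), the product x·(a_k - a_0) = 0. -/
/-- Dihedral quandle operation on `ZMod n`: `a · b = 2b - a`. -/
def dq (n : ℕ) (a b : ZMod n) : ZMod n := 2 * b - a

/-- Quandle ring multiplication on `ℤ[R_n] = ZMod n →₀ ℤ`. -/
noncomputable def qmul (n : ℕ) (x y : ZMod n →₀ ℤ) : ZMod n →₀ ℤ :=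
  x.sum fun a r => y.sum fun b s => Finsupp.single (dq n a b) (r * s)

/-- Augmentation map. -/
noncomputable def aug (n : ℕ) : (ZMod n →₀ ℤ) →ₗ[ℤ] ℤ :=
  Finsupp.lsum ℤ fun _ => LinearMap.id

/-- `e i = a_i - a_0`. -/
noncomputable def e (n : ℕ) (i : ZMod n) : ZMod n →₀ ℤ :=
  Finsupp.single i 1 - Finsupp.single 0 1

/-- Augmentation ideal. -/
noncomputable def Δ (n : ℕ) : Submodule ℤ (ZMod n →₀ ℤ) := LinearMap.ker (aug n)

noncomputable def Δ2 (n : ℕ) : Submodule ℤ (ZMod n →₀ ℤ) :=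
  Submodule.span ℤ {z | ∃ x ∈ Δ n, ∃ y ∈ Δ n, z = qmul n x y}

noncomputable def Δ3 (n : ℕ) : Submodule ℤ (ZMod n →₀ ℤ) :=
  Submodule.span ℤ {z | ∃ x ∈ Δ2 n, ∃ y ∈ Δ n, z = qmul n x y}

lemma dq_k_eq (k : ℕ) (a : ZMod (2 * k)) :
    dq (2 * k) a (k : ZMod (2 * k)) = dq (2 * k) a 0 := by
  unfold dq
  have : (2 : ZMod (2 * k)) * (k : ZMod (2 * k)) = 0 := by
    have := ZMod.natCast_self (2 * k)
    push_cast at this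
    exact this
  rw [this, mul_zero]

/-- In `ℤ[R_{2k}]` (k ≥ 2), every element of the augmentation ideal multiplied by
`a_k - a_0` gives `0`. -/
theorem stmt_8 (k : ℕ) (hk : 2 ≤ k) (x : ZMod (2 * k) →₀ ℤ) (hx : x ∈ Δ (2 * k)) :
    qmul (2 * k) x (e (2 * k) (k : ZMod (2 * k))) = 0 := by
  unfold qmul e
  have hinner : ∀ (a : ZMod (2 * k)) (r : ℤ),
      (Finsupp.single (k : ZMod (2 * k)) (1:ℤ) - Finsupp.single (0 : ZMod (2 * k)) (1:ℤ)).sum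
        (fun b (s : ℤ) => Finsupp.single (dq (2 * k) a b) (r * s)) = 0 := by
    intro a r
    rw [Finsupp.sum_sub_index (by intro b s t; rw [mul_sub, Finsupp.single_sub]),
      Finsupp.sum_single_index (by rw [mul_zero, Finsupp.single_zero]),
      Finsupp.sum_single_index (by rw [mul_zero, Finsupp.single_zero]),
      dq_k_eq, sub_self]
  calc x.sum (fun a (r : ℤ) =>
        (Finsupp.single (k : ZMod (2 * k)) (1:ℤ) - Finsupp.single (0 : ZMod (2 * k)) (1:ℤ)).sum
          (fun b (s : ℤ) => Finsupp.single (dq (2 * k) a b) (r * s)))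
      = x.sum (fun _ _ => (0 : ZMod (2 * k) →₀ ℤ)) := Finsupp.sum_congr (fun a _ => hinner a _)
    _ = 0 := Finset.sum_const_zero
end

section
/- In Z[R_8], with e_i = a_i - a_0, the elements u_1 = e_1 - e_2 - e_7, u_2 = e_2 + e_6, u_3 = e_3 - e_4 - e_7, u_4 = e_4 + 2e_6, u_5 = e_5 - e_6 - e_7, u_6 = 4e_6 all lie in Δ²(R_8), the Z-span of all products e_i·e_j. -/
/-! Expanding bilinearly, `e_i · e_j = e_{2j-i} - e_{2j} - e_{-i}`. In `ℤ[R_8]` this gives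
`u₁ = e₁e₁`, `u₂ = -e₂e₁`, `u₃ = e₁e₂`, `u₅ = e₁e₃`, `u₄ = e₆e₁ - 2e₂e₁` and
`u₆ = e₆e₁ - e₂e₃ - 2e₂e₁`. -/

section QuandleRing

variable (n : ℕ)

theorem qmul_single_single (a b : ZMod n) (r s : ℤ) :
    qmul n (Finsupp.single a r) (Finsupp.single b s) = Finsupp.single (dq n a b) (r * s) := by
  simp [qmul, Finsupp.sum_single_index]

theorem qmul_sub_left (x y z : ZMod n →₀ ℤ) :
    qmul n (x - y) z = qmul n x z - qmul n y z := by
  unfold qmul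
  rw [Finsupp.sum_sub_index fun a r₁ r₂ => ?_]
  rw [← Finsupp.sum_sub]
  refine Finsupp.sum_congr fun b _ => ?_
  rw [← Finsupp.single_sub, sub_mul]

theorem qmul_sub_right (x y z : ZMod n →₀ ℤ) :
    qmul n x (y - z) = qmul n x y - qmul n x z := by
  unfold qmul
  rw [← Finsupp.sum_sub]
  refine Finsupp.sum_congr fun a _ => ?_
  rw [Finsupp.sum_sub_index fun b s₁ s₂ => ?_]
  rw [← Finsupp.single_sub, mul_sub]

@[simp]
theorem e_zero : e n 0 = 0 := sub_self _

theorem qmul_e_e (i j : ZMod n) :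
    qmul n (e n i) (e n j) = e n (2 * j - i) - e n (2 * j) - e n (-i) := by
  simp only [e, qmul_sub_left, qmul_sub_right, qmul_single_single, dq]
  simp only [mul_zero, sub_zero, mul_one, zero_sub]
  abel

end QuandleRing

/-- In `ℤ[R_8]`, the elements `u_1, …, u_6` lie in the ℤ-span of all products
`e_i · e_j` (`1 ≤ i, j ≤ 7`). -/
theorem stmt_11 :
    let S : Submodule ℤ (ZMod 8 →₀ ℤ) :=
      Submodule.span ℤ {z | ∃ i j : ZMod 8, i ≠ 0 ∧ j ≠ 0 ∧ z = qmul 8 (e 8 i) (e 8 j)}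
    e 8 1 - e 8 2 - e 8 7 ∈ S ∧
    e 8 2 + e 8 6 ∈ S ∧
    e 8 3 - e 8 4 - e 8 7 ∈ S ∧
    e 8 4 + (2 : ℤ) • e 8 6 ∈ S ∧
    e 8 5 - e 8 6 - e 8 7 ∈ S ∧
    (4 : ℤ) • e 8 6 ∈ S := by
  intro S
  have mem (i j : ZMod 8) (hi : i ≠ 0 := by decide) (hj : j ≠ 0 := by decide) :
      qmul 8 (e 8 i) (e 8 j) ∈ S :=
    Submodule.subset_span ⟨i, j, hi, hj, rfl⟩
  have h11 := mem 1 1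
  have h12 := mem 1 2
  have h13 := mem 1 3
  have h21 := S.neg_mem (mem 2 1)
  have h23 := mem 2 3
  have h61 := mem 6 1
  simp only [qmul_e_e] at h11 h12 h13 h21 h23 h61
  reduce_mod_char at h11 h12 h13 h21 h23 h61
  rw [e_zero] at h21
  refine ⟨?_, ?_, ?_, ?_, ?_, ?_⟩
  · convert h11 using 1; module
  · convert h21 using 1; module
  · convert h12 using 1; module
  · convert S.add_mem h61 (S.smul_mem 2 h21) using 1; module
  · convert h13 using 1; module
  · convert S.add_mem (S.sub_mem h61 h23) (S.smul_mem 2 h21) using 1; module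
end

section
/- In Z[R_8], the quotient of the additive subgroup generated by u_4 = e_4 + 2e_6 and u_6 = 4e_6 by the subgroup generated by 2u_4 - u_6 = 2e_4 and 2u_6 = 8e_6 is isomorphic to Z/4. -/
open Function LinearMap Submodule

theorem nonempty_quotient_comap_subtype_equiv_of_injective {R M P : Type*} [Ring R]
    [AddCommGroup M] [AddCommGroup P] [Module R M] [Module R P] {f : P →ₗ[R] M} (hf : Injective f)
    {K : Submodule R P} {N L : Submodule R M} (hN : range f = N) (hL : K.map f = L) :
    Nonempty ((N ⧸ L.comap N.subtype) ≃ₗ[R] P ⧸ K) := by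
  subst hN hL
  refine ⟨Quotient.equiv _ _ (LinearEquiv.ofInjective f hf).symm ?_⟩
  rw [← comap_equiv_eq_map_symm]
  ext x
  simp [hf.eq_iff]

theorem ker_linearCombination_one_two :
    ker (Fintype.linearCombination ℤ ![(1 : ZMod 4), 2]) = span ℤ {![2, -1], ![0, 2]} := by
  refine le_antisymm (fun v hv ↦ ?_) (span_le.2 ?_)
  · have h4 : ((v 0 + 2 * v 1 : ℤ) : ZMod 4) = 0 := by
      simpa [Fintype.linearCombination_apply, mul_comm] using hv
    obtain ⟨t, ht⟩ := (ZMod.intCast_zmod_eq_zero_iff_dvd _ 4).1 h4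
    refine mem_span_pair.2 ⟨2 * t - v 1, t, ?_⟩
    ext i
    fin_cases i <;> simp <;> omega
  · rintro _ (rfl | rfl) <;> simp +decide

theorem nonempty_quotient_span_pair_equiv_zmod_four :
    Nonempty (((Fin 2 → ℤ) ⧸ span ℤ {![2, -1], ![0, 2]}) ≃ₗ[ℤ] ZMod 4) := by
  have surjective : Surjective (Fintype.linearCombination ℤ ![(1 : ZMod 4), 2]) :=
    fun c ↦ ⟨![c.val, 0], by simp [Fintype.linearCombination_apply]⟩
  exact ⟨(quotEquivOfEq _ _ ker_linearCombination_one_two.symm).trans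
    (quotKerEquivOfSurjective _ surjective)⟩

theorem injective_linearCombination_u₄_u₆ :
    Injective (Fintype.linearCombination ℤ ![e 8 4 + (2 : ℤ) • e 8 6, (4 : ℤ) • e 8 6]) := by
  refine (injective_iff_map_eq_zero _).2 fun a ha ↦ ?_
  have ha4 := DFunLike.congr_fun ha 4
  have ha6 := DFunLike.congr_fun ha 6
  simp +decide [Fintype.linearCombination_apply, e] at ha4 ha6
  ext i
  fin_cases i <;> simp <;> omega

/-- With `u₄ = e₄ + 2e₆`, `u₆ = 4e₆`: the quotient of `span {u₄, u₆}` by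
`span {2u₄ - u₆, 2u₆}` is isomorphic to `ℤ/4`. -/
theorem stmt_16 :
    let u4 : ZMod 8 →₀ ℤ := e 8 4 + (2 : ℤ) • e 8 6
    let u6 : ZMod 8 →₀ ℤ := (4 : ℤ) • e 8 6
    let N : Submodule ℤ (ZMod 8 →₀ ℤ) := Submodule.span ℤ {u4, u6}
    let M : Submodule ℤ (ZMod 8 →₀ ℤ) :=
      Submodule.span ℤ {(2 : ℤ) • u4 - u6, (2 : ℤ) • u6}
    Nonempty ((N ⧸ M.comap N.subtype) ≃ₗ[ℤ] ZMod 4) := by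
  intro u4 u6 N M
  have range_eq : range (Fintype.linearCombination ℤ ![u4, u6]) = N := by
    rw [Fintype.range_linearCombination, Matrix.range_cons_cons_empty]
  have map_eq : (span ℤ {![2, -1], ![0, 2]}).map (Fintype.linearCombination ℤ ![u4, u6]) = M := by
    rw [Submodule.map_span, Set.image_pair]
    simp [Fintype.linearCombination_apply, sub_eq_add_neg, M]
  obtain ⟨φ⟩ := nonempty_quotient_comap_subtype_equiv_of_injective
    injective_linearCombination_u₄_u₆ range_eq map_eq
  obtain ⟨ψ⟩ := nonempty_quotient_span_pair_equiv_zmod_four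
  exact ⟨φ.trans ψ⟩
end

section
/- For the dihedral quandle R_4 of order 4, |Δ²(R_4)/Δ³(R_4)| = 4. -/




noncomputable def Q (n : ℕ) : (ZMod n →₀ ℤ) →ₗ[ℤ] (ZMod n →₀ ℤ) →ₗ[ℤ] (ZMod n →₀ ℤ) :=
  Finsupp.lsum ℤ fun a => LinearMap.toSpanSingleton ℤ _
    (Finsupp.lsum ℤ fun b => LinearMap.toSpanSingleton ℤ _ (Finsupp.single (dq n a b) 1))

lemma Q_apply (n : ℕ) (x y : ZMod n →₀ ℤ) : Q n x y = qmul n x y := by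
  unfold Q qmul
  rw [Finsupp.lsum_apply]
  rw [LinearMap.finsupp_sum_apply]
  refine Finsupp.sum_congr fun a _ => ?_
  simp only [LinearMap.smul_apply, Finsupp.lsum_apply,
    LinearMap.toSpanSingleton_apply, Finsupp.smul_sum]
  refine Finsupp.sum_congr fun b _ => ?_
  rw [smul_smul, Finsupp.smul_single', mul_one]





lemma Q_ss (n : ℕ) (a b : ZMod n) (r s : ℤ) :
    Q n (Finsupp.single a r) (Finsupp.single b s) = Finsupp.single (dq n a b) (r * s) := by
  simp [Q, Finsupp.smul_single', mul_comm]

lemma aug_single (n : ℕ) (a : ZMod n) (r : ℤ) : aug n (Finsupp.single a r) = r := by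
  simp [aug]

lemma delta_eq : Δ 4 = Submodule.span ℤ {e 4 1, e 4 2, e 4 3} := by
  apply le_antisymm
  · intro x hx
    have hx' : aug 4 x = 0 := hx
    have hrep : x = ∑ i : ZMod 4, (x i) • e 4 i + (aug 4 x) • Finsupp.single (0 : ZMod 4) 1 := by
      ext a
      simp [e, Finsupp.single_apply, aug, Finsupp.sum_fintype, smul_sub,
        Finsupp.coe_finset_sum, Finset.sum_apply, Finset.sum_sub_distrib, Finset.sum_ite_eq',
        Finset.mul_sum]
    rw [hrep, hx', zero_smul, add_zero]
    refine Submodule.sum_mem _ fun i _ => Submodule.smul_mem _ _ ?_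
    have : i = 0 ∨ i = 1 ∨ i = 2 ∨ i = 3 := by revert i; decide
    rcases this with h|h|h|h <;> subst h
    · have : e 4 0 = 0 := by simp [e]
      rw [this]; exact Submodule.zero_mem _
    all_goals exact Submodule.subset_span (by simp)
  · rw [Submodule.span_le]
    rintro z (rfl|rfl|rfl) <;>
      simp [Δ, LinearMap.mem_ker, e, map_sub, aug_single]

noncomputable def U : ZMod 4 →₀ ℤ :=
  Finsupp.single 0 1 + Finsupp.single 1 1 - Finsupp.single 2 1 - Finsupp.single 3 1
noncomputable def V : ZMod 4 →₀ ℤ :=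
  Finsupp.single 0 1 - Finsupp.single 1 1 - Finsupp.single 2 1 + Finsupp.single 3 1

lemma c11 : Q 4 (e 4 1) (e 4 1) = U := by
  ext a
  simp [e, map_sub, LinearMap.sub_apply, Q_ss, dq, U, Finsupp.single_apply]
  fin_cases a <;> simp +decide

section comps
set_option maxHeartbeats 1000000

lemma c12 : Q 4 (e 4 1) (e 4 2) = 0 := by
  ext a
  simp [e, U, V, dq, Q_ss, map_sub, map_add, LinearMap.sub_apply,
      LinearMap.add_apply, Finsupp.single_apply]
  fin_cases a <;> simp +decide
lemma c13 : Q 4 (e 4 1) (e 4 3) = U := by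
  ext a
  simp [e, U, V, dq, Q_ss, map_sub, map_add, LinearMap.sub_apply,
      LinearMap.add_apply, Finsupp.single_apply]
  fin_cases a <;> simp +decide
lemma c21 : Q 4 (e 4 2) (e 4 1) = U + V := by
  ext a
  simp [e, U, V, dq, Q_ss, map_sub, map_add, LinearMap.sub_apply,
      LinearMap.add_apply, Finsupp.single_apply]
  fin_cases a <;> simp +decide
lemma c22 : Q 4 (e 4 2) (e 4 2) = 0 := by
  ext a
  simp [e, U, V, dq, Q_ss, map_sub, map_add, LinearMap.sub_apply,
      LinearMap.add_apply, Finsupp.single_apply]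
  fin_cases a <;> simp +decide
lemma c23 : Q 4 (e 4 2) (e 4 3) = U + V := by
  ext a
  simp [e, U, V, dq, Q_ss, map_sub, map_add, LinearMap.sub_apply,
      LinearMap.add_apply, Finsupp.single_apply]
  fin_cases a <;> simp +decide
lemma c31 : Q 4 (e 4 3) (e 4 1) = V := by
  ext a
  simp [e, U, V, dq, Q_ss, map_sub, map_add, LinearMap.sub_apply,
      LinearMap.add_apply, Finsupp.single_apply]
  fin_cases a <;> simp +decide
lemma c32 : Q 4 (e 4 3) (e 4 2) = 0 := by
  ext a
  simp [e, U, V, dq, Q_ss, map_sub, map_add, LinearMap.sub_apply,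
      LinearMap.add_apply, Finsupp.single_apply]
  fin_cases a <;> simp +decide
lemma c33 : Q 4 (e 4 3) (e 4 3) = V := by
  ext a
  simp [e, U, V, dq, Q_ss, map_sub, map_add, LinearMap.sub_apply,
      LinearMap.add_apply, Finsupp.single_apply]
  fin_cases a <;> simp +decide

lemma d11 : Q 4 U (e 4 1) = -((2:ℤ) • V) := by
  ext a
  simp [e, U, V, dq, Q_ss, map_sub, map_add, LinearMap.sub_apply,
      LinearMap.add_apply, Finsupp.single_apply]
  fin_cases a <;> simp +decide
lemma d12 : Q 4 U (e 4 2) = 0 := by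
  ext a
  simp [e, U, V, dq, Q_ss, map_sub, map_add, LinearMap.sub_apply,
      LinearMap.add_apply, Finsupp.single_apply]
  fin_cases a <;> simp +decide
lemma d13 : Q 4 U (e 4 3) = -((2:ℤ) • V) := by
  ext a
  simp [e, U, V, dq, Q_ss, map_sub, map_add, LinearMap.sub_apply,
      LinearMap.add_apply, Finsupp.single_apply]
  fin_cases a <;> simp +decide
lemma d21 : Q 4 V (e 4 1) = -((2:ℤ) • U) := by
  ext a
  simp [e, U, V, dq, Q_ss, map_sub, map_add, LinearMap.sub_apply,
      LinearMap.add_apply, Finsupp.single_apply]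
  fin_cases a <;> simp +decide
lemma d22 : Q 4 V (e 4 2) = 0 := by
  ext a
  simp [e, U, V, dq, Q_ss, map_sub, map_add, LinearMap.sub_apply,
      LinearMap.add_apply, Finsupp.single_apply]
  fin_cases a <;> simp +decide
lemma d23 : Q 4 V (e 4 3) = -((2:ℤ) • U) := by
  ext a
  simp [e, U, V, dq, Q_ss, map_sub, map_add, LinearMap.sub_apply,
      LinearMap.add_apply, Finsupp.single_apply]
  fin_cases a <;> simp +decide
end comps




lemma delta2_eq : Δ2 4 = Submodule.span ℤ {U, V} := by
  have hset : {z | ∃ x ∈ Δ 4, ∃ y ∈ Δ 4, z = qmul 4 x y}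
      = Set.image2 (fun m n => Q 4 m n) (Δ 4 : Set _) (Δ 4 : Set _) := by
    ext z
    constructor
    · rintro ⟨x, hx, y, hy, rfl⟩
      exact ⟨x, hx, y, hy, Q_apply _ _ _⟩
    · rintro ⟨x, hx, y, hy, h⟩
      exact ⟨x, hx, y, hy, by simp only at h; rw [← h, Q_apply]⟩
  have h1 : Δ2 4 = Submodule.map₂ (Q 4) (Δ 4) (Δ 4) := by
    rw [Submodule.map₂_eq_span_image2, Δ2, hset]
  rw [h1, delta_eq, Submodule.map₂_span_span]
  apply le_antisymm
  · rw [Submodule.span_le]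
    rintro z hz
    simp only [Set.mem_image2, Set.mem_insert_iff, Set.mem_singleton_iff] at hz
    obtain ⟨x, hx, y, hy, rfl⟩ := hz
    have hU : U ∈ Submodule.span ℤ {U, V} := Submodule.subset_span (by simp)
    have hV : V ∈ Submodule.span ℤ {U, V} := Submodule.subset_span (by simp)
    rcases hx with rfl|rfl|rfl <;> rcases hy with rfl|rfl|rfl <;>
      simp only [SetLike.mem_coe, c11, c12, c13, c21, c22, c23, c31, c32, c33]
    · exact hU
    · exact Submodule.zero_mem _
    · exact hU
    · exact add_mem hU hV
    · exact Submodule.zero_mem _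
    · exact add_mem hU hV
    · exact hV
    · exact Submodule.zero_mem _
    · exact hV
  · rw [Submodule.span_le]
    rintro z (rfl|rfl)
    · exact Submodule.subset_span ⟨e 4 1, by simp, e 4 1, by simp, c11⟩
    · exact Submodule.subset_span ⟨e 4 3, by simp, e 4 1, by simp, c31⟩

lemma delta3_eq : Δ3 4 = Submodule.span ℤ {(2:ℤ) • U, (2:ℤ) • V} := by
  have hset : {z | ∃ x ∈ Δ2 4, ∃ y ∈ Δ 4, z = qmul 4 x y}
      = Set.image2 (fun m n => Q 4 m n) (Δ2 4 : Set _) (Δ 4 : Set _) := by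
    ext z
    constructor
    · rintro ⟨x, hx, y, hy, rfl⟩
      exact ⟨x, hx, y, hy, Q_apply _ _ _⟩
    · rintro ⟨x, hx, y, hy, h⟩
      exact ⟨x, hx, y, hy, by simp only at h; rw [← h, Q_apply]⟩
  have h1 : Δ3 4 = Submodule.map₂ (Q 4) (Δ2 4) (Δ 4) := by
    rw [Submodule.map₂_eq_span_image2, Δ3, hset]
  rw [h1, delta2_eq, delta_eq, Submodule.map₂_span_span]
  apply le_antisymm
  · rw [Submodule.span_le]
    rintro z hz
    simp only [Set.mem_image2, Set.mem_insert_iff, Set.mem_singleton_iff] at hz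
    obtain ⟨x, hx, y, hy, rfl⟩ := hz
    have hU : (2:ℤ) • U ∈ Submodule.span ℤ {(2:ℤ) • U, (2:ℤ) • V} :=
      Submodule.subset_span (by simp)
    have hV : (2:ℤ) • V ∈ Submodule.span ℤ {(2:ℤ) • U, (2:ℤ) • V} :=
      Submodule.subset_span (by simp)
    rcases hx with rfl|rfl <;> rcases hy with rfl|rfl|rfl <;>
      simp only [SetLike.mem_coe, d11, d12, d13, d21, d22, d23]
    · exact neg_mem hV
    · exact Submodule.zero_mem _
    · exact neg_mem hV
    · exact neg_mem hU
    · exact Submodule.zero_mem _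
    · exact neg_mem hU
  · rw [Submodule.span_le]
    rintro z (rfl|rfl)
    · have : ((2:ℤ) • U) = -(Q 4 V (e 4 1)) := by rw [d21, neg_neg]
      rw [this]
      exact neg_mem (Submodule.subset_span ⟨V, by simp, e 4 1, by simp, rfl⟩)
    · have : ((2:ℤ) • V) = -(Q 4 U (e 4 1)) := by rw [d11, neg_neg]
      rw [this]
      exact neg_mem (Submodule.subset_span ⟨U, by simp, e 4 1, by simp, rfl⟩)

lemma indep (s t : ℤ) (h : s • U + t • V = 0) : s = 0 ∧ t = 0 := by
  have h0 := congrArg (fun f : ZMod 4 →₀ ℤ => f 0) h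
  have h1 := congrArg (fun f : ZMod 4 →₀ ℤ => f 1) h
  simp +decide [U, V, Finsupp.single_apply] at h0 h1
  omega

noncomputable def hmap : (ℤ × ℤ) →ₗ[ℤ] (ZMod 4 →₀ ℤ) :=
  (LinearMap.toSpanSingleton ℤ _ U).coprod (LinearMap.toSpanSingleton ℤ _ V)

lemma hmap_apply (c : ℤ × ℤ) : hmap c = c.1 • U + c.2 • V := rfl

lemma hmem (c : ℤ × ℤ) : hmap c ∈ Δ2 4 := by
  rw [delta2_eq]
  exact Submodule.mem_span_pair.2 ⟨c.1, c.2, (hmap_apply c).symm⟩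

noncomputable def q2 : (ℤ × ℤ) →ₗ[ℤ] (ZMod 2 × ZMod 2) :=
  (Int.castAddHom (ZMod 2)).toIntLinearMap.prodMap (Int.castAddHom (ZMod 2)).toIntLinearMap

lemma q2_apply (c : ℤ × ℤ) : q2 c = ((c.1 : ZMod 2), (c.2 : ZMod 2)) := rfl


/-- For the dihedral quandle of order 4: `|Δ²(R_4)/Δ³(R_4)| = 4`. -/
theorem stmt_18 :
    Nat.card ((Δ2 4) ⧸ (Δ3 4).comap (Δ2 4).subtype) = 4 := by
  set N := (Δ3 4).comap (Δ2 4).subtype with hN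
  let Φ : (ℤ × ℤ) →ₗ[ℤ] ((Δ2 4) ⧸ N) := N.mkQ ∘ₗ hmap.codRestrict (Δ2 4) hmem
  have hΦsurj : Function.Surjective Φ := by
    intro z
    obtain ⟨⟨x, hx⟩, rfl⟩ := N.mkQ_surjective z
    have hx' := hx
    rw [delta2_eq] at hx'
    obtain ⟨s, t, hst⟩ := Submodule.mem_span_pair.1 hx'
    exact ⟨(s, t), congrArg N.mkQ (Subtype.ext (by simpa [hmap_apply] using hst))⟩
  have hker : LinearMap.ker Φ = LinearMap.ker q2 := by
    ext c
    have hmemiff : hmap c ∈ Δ3 4 ↔ (2 ∣ c.1 ∧ 2 ∣ c.2) := by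
      rw [delta3_eq]
      constructor
      · intro hm
        obtain ⟨a, b, hab⟩ := Submodule.mem_span_pair.1 hm
        rw [hmap_apply] at hab
        have : (2 * a - c.1) • U + (2 * b - c.2) • V = 0 := by
          linear_combination (norm := module) hab
        obtain ⟨h1, h2⟩ := indep _ _ this
        exact ⟨⟨a, by omega⟩, ⟨b, by omega⟩⟩
      · rintro ⟨⟨a, ha⟩, ⟨b, hb⟩⟩
        refine Submodule.mem_span_pair.2 ⟨a, b, ?_⟩
        rw [hmap_apply, ha, hb]
        module
    constructor
    · intro hc
      have : hmap c ∈ Δ3 4 := by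
        have h0 : Φ c = 0 := hc
        have := (Submodule.Quotient.mk_eq_zero N).1 h0
        simpa [hN, Submodule.mem_comap] using this
      rw [hmemiff] at this
      simp only [LinearMap.mem_ker, q2_apply, Prod.mk_eq_zero]
      exact ⟨(ZMod.intCast_zmod_eq_zero_iff_dvd _ 2).2 (by exact_mod_cast this.1),
             (ZMod.intCast_zmod_eq_zero_iff_dvd _ 2).2 (by exact_mod_cast this.2)⟩
    · intro hc
      simp only [LinearMap.mem_ker, q2_apply, Prod.mk_eq_zero] at hc
      have h1 := (ZMod.intCast_zmod_eq_zero_iff_dvd _ 2).1 hc.1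
      have h2 := (ZMod.intCast_zmod_eq_zero_iff_dvd _ 2).1 hc.2
      have hm : hmap c ∈ Δ3 4 := hmemiff.2 ⟨by exact_mod_cast h1, by exact_mod_cast h2⟩
      show Φ c = 0
      exact (Submodule.Quotient.mk_eq_zero N).2 (by simpa [hN, Submodule.mem_comap] using hm)
  have hq2surj : Function.Surjective q2 := by
    rintro ⟨a, b⟩
    obtain ⟨x, rfl⟩ := ZMod.intCast_surjective a
    obtain ⟨y, rfl⟩ := ZMod.intCast_surjective b
    exact ⟨(x, y), rfl⟩
  have E1 := LinearMap.quotKerEquivOfSurjective Φ hΦsurj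
  have E2 := LinearMap.quotKerEquivOfSurjective q2 hq2surj
  calc Nat.card ((Δ2 4) ⧸ N) = Nat.card ((ℤ × ℤ) ⧸ LinearMap.ker Φ) :=
        Nat.card_congr E1.symm.toEquiv
    _ = Nat.card ((ℤ × ℤ) ⧸ LinearMap.ker q2) := by rw [hker]
    _ = Nat.card (ZMod 2 × ZMod 2) := Nat.card_congr E2.toEquiv
    _ = 4 := by simp [Nat.card_eq_fintype_card]
end
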